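/- For bounded linear operators A, B on a complex Hilbert space, R(A) + R(B) = R((AA* + BB*)^{1/2}). -/

import Mathlib

/-!
Let `T = [A B]` be the row operator from the Hilbert direct sum `H ⊕₂ H` to `H`, so that
`R(T) = R(A) + R(B)` and `T T* = A A* + B B* = S*S`; hence `‖T* y‖ = ‖S y‖` for all `y`.
By Douglas' lemma, operators `f`, `g` with `‖f y‖ = ‖g y‖` have `R(f*) = R(g*)`, so
`R(T) = R(S*) = R(S)`.
-/

open ContinuousLinearMap Pointwise

/-- Define `g x ↦ μ x` on `range g` and extend it by Hahn–Banach. -/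
lemma exists_strongDual_comp_eq_of_norm_le {𝕜 E F : Type*} [RCLike 𝕜] [AddCommGroup E]
    [Module 𝕜 E] [NormedAddCommGroup F] [NormedSpace 𝕜 F] (g : E →ₗ[𝕜] F) (μ : E →ₗ[𝕜] 𝕜)
    (C : ℝ) (h : ∀ x, ‖μ x‖ ≤ C * ‖g x‖) : ∃ Λ : StrongDual 𝕜 F, ∀ x, Λ (g x) = μ x := by
  have hker : LinearMap.ker g ≤ LinearMap.ker μ := fun x hx ↦
    norm_le_zero_iff.mp (by simpa [LinearMap.mem_ker.mp hx] using h x)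
  let μ' : LinearMap.range g →ₗ[𝕜] 𝕜 := g.ker.liftQ μ hker ∘ₗ g.quotKerEquivRange.symm
  have hμ' : ∀ x, μ' ⟨g x, g.mem_range_self x⟩ = μ x := fun x ↦ by
    simp only [μ', LinearMap.comp_apply, LinearEquiv.coe_coe]
    rw [g.quotKerEquivRange_symm_apply_image]
    rfl
  let Λ₀ := μ'.mkContinuous C <| by
    rintro ⟨_, x, rfl⟩
    rw [hμ']
    exact h x
  obtain ⟨Λ, hΛ, -⟩ := exists_extension_norm_eq _ Λ₀
  exact ⟨Λ, fun x ↦ (hΛ ⟨g x, g.mem_range_self x⟩).trans (hμ' x)⟩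

section

variable {𝕜 E F G : Type*} [RCLike 𝕜]
  [NormedAddCommGroup E] [InnerProductSpace 𝕜 E] [CompleteSpace E]
  [NormedAddCommGroup F] [InnerProductSpace 𝕜 F] [CompleteSpace F]
  [NormedAddCommGroup G] [InnerProductSpace 𝕜 G] [CompleteSpace G]

/-- Douglas' lemma. The Riesz representative of an extension of `g x ↦ ⟪y, f x⟫` is a
preimage of `f* y` under `g*`. -/
theorem range_adjoint_subset_of_norm_le (f : E →L[𝕜] F) (g : E →L[𝕜] G) (C : ℝ)
    (h : ∀ x, ‖f x‖ ≤ C * ‖g x‖) : Set.range (adjoint f) ⊆ Set.range (adjoint g) := by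
  rintro _ ⟨y, rfl⟩
  obtain ⟨Λ, hΛ⟩ := exists_strongDual_comp_eq_of_norm_le (g : E →ₗ[𝕜] G)
    ((innerSL 𝕜 y ∘L f : E →L[𝕜] 𝕜) : E →ₗ[𝕜] 𝕜) (C * ‖y‖) fun x ↦
      calc ‖inner 𝕜 y (f x)‖ ≤ ‖y‖ * ‖f x‖ := norm_inner_le_norm _ _
        _ ≤ ‖y‖ * (C * ‖g x‖) := by gcongr; exact h x
        _ = C * ‖y‖ * ‖g x‖ := by ring
  refine ⟨(InnerProductSpace.toDual 𝕜 G).symm Λ, ext_inner_right 𝕜 fun x ↦ ?_⟩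
  simpa [adjoint_inner_left] using hΛ x

theorem range_adjoint_eq_of_norm_apply_eq (f : E →L[𝕜] F) (g : E →L[𝕜] G)
    (h : ∀ x, ‖f x‖ = ‖g x‖) : Set.range (adjoint f) = Set.range (adjoint g) :=
  (range_adjoint_subset_of_norm_le f g 1 fun x ↦ by simp [h]).antisymm
    (range_adjoint_subset_of_norm_le g f 1 fun x ↦ by simp [h])

end

section

variable {𝕜 E F G : Type*} [RCLike 𝕜]
  [NormedAddCommGroup E] [InnerProductSpace 𝕜 E]
  [NormedAddCommGroup F] [InnerProductSpace 𝕜 F]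
  [NormedAddCommGroup G] [InnerProductSpace 𝕜 G]

noncomputable def coprodL2 (A : E →L[𝕜] G) (B : F →L[𝕜] G) : WithLp 2 (E × F) →L[𝕜] G :=
  A.coprod B ∘L (WithLp.prodContinuousLinearEquiv 2 𝕜 E F : WithLp 2 (E × F) →L[𝕜] E × F)

variable (A : E →L[𝕜] G) (B : F →L[𝕜] G)

@[simp]
theorem coprodL2_apply (x : WithLp 2 (E × F)) : coprodL2 A B x = A x.fst + B x.snd := rfl

theorem range_coprodL2 : Set.range (coprodL2 A B) = Set.range A + Set.range B := by
  rw [coprodL2, coe_comp, ContinuousLinearEquiv.coe_coe, EquivLike.range_comp]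
  ext x
  simp [Set.mem_add, eq_comm]

variable [CompleteSpace E] [CompleteSpace F] [CompleteSpace G]

@[simp]
theorem adjoint_coprodL2_apply (y : G) :
    adjoint (coprodL2 A B) y = WithLp.toLp 2 (adjoint A y, adjoint B y) :=
  ext_inner_right 𝕜 fun x ↦ by
    simp [adjoint_inner_left, WithLp.prod_inner_apply, inner_add_right]

theorem coprodL2_comp_adjoint :
    coprodL2 A B ∘L adjoint (coprodL2 A B) = A ∘L adjoint A + B ∘L adjoint B := by
  ext y
  simp

end

theorem range_add_range_eq_range_sqrt
    {H : Type*} [NormedAddCommGroup H] [InnerProductSpace ℂ H] [CompleteSpace H]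
    (A B S : H →L[ℂ] H) (hS : S.IsPositive)
    (hS2 : S ∘L S = A ∘L adjoint A + B ∘L adjoint B) :
    Set.range A + Set.range B = Set.range S := by
  have hSa : adjoint S = S := hS.isSelfAdjoint.adjoint_eq
  have hnorm : ∀ y, ‖adjoint (coprodL2 A B) y‖ = ‖S y‖ := fun y ↦ by
    rw [← sq_eq_sq₀ (norm_nonneg _) (norm_nonneg _), apply_norm_sq_eq_inner_adjoint_left,
      apply_norm_sq_eq_inner_adjoint_left, adjoint_adjoint, coprodL2_comp_adjoint, hSa, hS2]
  rw [← range_coprodL2, ← adjoint_adjoint (coprodL2 A B),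
    range_adjoint_eq_of_norm_apply_eq _ _ hnorm, hSa]
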